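/- arXiv:2407.00450 — 4 statements merged into one kernel-verified Lean document; each statement's English description precedes it below -/
import Mathlib

section
/- Let H be an m×m Hermitian matrix with distinct eigenvalues λ₁ < λ₂ < ... < λ_m, and let s be a real number with s ≠ (λᵢ + λᵢ₊₁)/2 for all i. Define A(s,t) = exp(-(H - sI)² t), let v₀ be a vector whose component v_k (in the eigenbasis of H) is nonzero, where λ_k = argmin_{λᵢ} |λᵢ - s|, and let B(s,t)v₀ = A(s,t)v₀ / ‖A(s,t)v₀‖₂ and f(s,t) = (B(s,t)v₀)† H (B(s,t)v₀). Then lim_{t→∞} f(s,t) = λ_k, the eigenvalue of H closest to s. -/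
open NormedSpace Filter Matrix

/-- ℓ²-norm of a finite complex vector. -/
noncomputable def l2norm {m : ℕ} (x : Fin m → ℂ) : ℝ :=
  Real.sqrt (∑ i, ‖x i‖ ^ 2)

/-- **Convergence of imaginary time evolution of the squared shifted Hamiltonian.**
Let `H = U⋆ Λ U` be an `m × m` Hermitian matrix with distinct eigenvalues
`λ 0 < λ 1 < ... < λ (m-1)`, let `s` be a real drift whose unique closest eigenvalue is
`λ k`, and suppose the initial vector `v₀` has nonzero overlap with the `k`-th
eigenvector (i.e. `(U *ᵥ v₀) k ≠ 0`).  With `A s t = exp (-(H - s•I)² t)`,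
`B s t = A s t *ᵥ v₀ / ‖A s t *ᵥ v₀‖₂` and `f s t = (B s t v₀)† H (B s t v₀)`,
we have `f s t → λ k` as `t → ∞`. -/
theorem ite_convergence_eigenvalue
    {m : ℕ} (H : Matrix (Fin m) (Fin m) ℂ) (hH : H.IsHermitian)
    (lam : Fin m → ℝ) (hlam : StrictMono lam)
    (U : Matrix (Fin m) (Fin m) ℂ) (hU : U ∈ Matrix.unitaryGroup (Fin m) ℂ)
    (hdecomp : H = star U * Matrix.diagonal (fun i => (lam i : ℂ)) * U)
    (s : ℝ) (k : Fin m)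
    (hk : ∀ j : Fin m, j ≠ k → |lam k - s| < |lam j - s|)
    (v₀ : Fin m → ℂ) (hv₀ : (U *ᵥ v₀) k ≠ 0)
    (A : ℝ → Matrix (Fin m) (Fin m) ℂ)
    (hA : ∀ t : ℝ, A t = exp (-(t : ℂ) • (H - (s : ℂ) • 1) ^ 2))
    (B : ℝ → Fin m → ℂ)
    (hB : ∀ t : ℝ, B t = (l2norm (A t *ᵥ v₀) : ℂ)⁻¹ • (A t *ᵥ v₀))
    (f : ℝ → ℂ)
    (hf : ∀ t : ℝ, f t = star (B t) ⬝ᵥ (H *ᵥ B t)) :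
    Tendsto f atTop (nhds (lam k : ℂ)) := by
  have hU1 : star U * U = 1 := hU.1
  have hU2 : U * star U = 1 := hU.2
  set w : Fin m → ℂ := U *ᵥ v₀ with hwdef
  set μ : Fin m → ℝ := fun i => (lam i - s) ^ 2 with hμdef
  set u : (Matrix (Fin m) (Fin m) ℂ)ˣ := ⟨U, star U, hU2, hU1⟩ with hudef
  have hcoe : (↑u : Matrix (Fin m) (Fin m) ℂ) = U := rfl
  have hcoeinv : (↑u⁻¹ : Matrix (Fin m) (Fin m) ℂ) = star U := rfl
  -- diagonalize H - s•1
  have hs1 : (s : ℂ) • (1 : Matrix (Fin m) (Fin m) ℂ) = star U * ((s : ℂ) • 1) * U := by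
    rw [Matrix.mul_smul, mul_one, Matrix.smul_mul, hU1]
  have hDdiff : H - (s : ℂ) • 1
      = star U * Matrix.diagonal (fun i => (lam i : ℂ) - s) * U := by
    have hd : Matrix.diagonal (fun i => (lam i : ℂ) - s)
        = Matrix.diagonal (fun i => (lam i : ℂ)) - (s : ℂ) • 1 := by
      rw [Matrix.smul_one_eq_diagonal, ← Matrix.diagonal_sub]
    rw [hdecomp, hd, Matrix.mul_sub, Matrix.sub_mul, ← hs1]
  have hsq : (H - (s : ℂ) • 1) ^ 2
      = star U * Matrix.diagonal (fun i => ((μ i : ℝ) : ℂ)) * U := by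
    rw [hDdiff, pow_two]
    have h2 : (star U * Matrix.diagonal (fun i => (lam i : ℂ) - s) * U)
        * (star U * Matrix.diagonal (fun i => (lam i : ℂ) - s) * U)
        = star U * (Matrix.diagonal (fun i => (lam i : ℂ) - s)
            * Matrix.diagonal (fun i => (lam i : ℂ) - s)) * U := by
      simp only [Matrix.mul_assoc]
      rw [← Matrix.mul_assoc U (star U), hU2, Matrix.one_mul]
    have h3 : (fun i => ((lam i : ℂ) - s) * ((lam i : ℂ) - s))
        = fun i => ((μ i : ℝ) : ℂ) := by
      funext i
      simp only [hμdef]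
      push_cast
      ring
    rw [h2, Matrix.diagonal_mul_diagonal, h3]
  -- conjugation formula for exp
  have hconj : ∀ M : Matrix (Fin m) (Fin m) ℂ,
      exp (star U * M * U) = star U * exp M * U := by
    intro M
    have h := Matrix.exp_units_conj' u M
    rw [hcoe, hcoeinv] at h
    exact h
  -- the exponential is diagonalized
  have hexp : ∀ t : ℝ, A t
      = star U * Matrix.diagonal (fun i => Complex.exp (-(t : ℂ) * ((μ i : ℝ) : ℂ))) * U := by
    intro t
    rw [hA, hsq, ← Matrix.smul_mul, ← Matrix.mul_smul, hconj]
    have hds : -(t : ℂ) • Matrix.diagonal (fun i => ((μ i : ℝ) : ℂ))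
        = Matrix.diagonal (fun i => -(t : ℂ) * ((μ i : ℝ) : ℂ)) := by
      rw [← Matrix.diagonal_smul]
      congr 1
    rw [hds, Matrix.exp_diagonal, Pi.exp_def]
    congr 2
    funext i
    rw [← Complex.exp_eq_exp_ℂ]
  set e : ℝ → Fin m → ℝ := fun t i => Real.exp (-(t * μ i)) with hedef
  have hAv : ∀ t : ℝ, A t *ᵥ v₀ = star U *ᵥ (fun i => ((e t i : ℝ) : ℂ) * w i) := by
    intro t
    have hin : Matrix.diagonal (fun i => Complex.exp (-(t : ℂ) * ((μ i : ℝ) : ℂ))) *ᵥ (U *ᵥ v₀)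
        = fun i => ((e t i : ℝ) : ℂ) * w i := by
      funext i
      rw [Matrix.mulVec_diagonal]
      congr 1
      rw [hedef]
      simp only []
      rw [Complex.ofReal_exp]
      congr 1
      push_cast
      ring
    rw [hexp t, ← Matrix.mulVec_mulVec, ← Matrix.mulVec_mulVec, hin]
  -- unitary invariance of the dot product
  have hUconj : (star U)ᴴ = U := by
    rw [← Matrix.star_eq_conjTranspose, star_star]
  have hcancel : ∀ y z : Fin m → ℂ,
      star (star U *ᵥ y) ⬝ᵥ (star U *ᵥ z) = star y ⬝ᵥ z := by
    intro y z
    rw [Matrix.star_mulVec, hUconj, ← Matrix.dotProduct_mulVec,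
      Matrix.mulVec_mulVec, hU2, Matrix.one_mulVec]
  have hdotself : ∀ z : Fin m → ℂ, star z ⬝ᵥ z = ((∑ i, ‖z i‖ ^ 2 : ℝ) : ℂ) := by
    intro z
    push_cast
    simp only [dotProduct, Pi.star_apply, Complex.star_def]
    refine Finset.sum_congr rfl fun i _ => ?_
    rw [mul_comm, Complex.mul_conj']
  -- the numerator
  have hHx : ∀ t : ℝ, H *ᵥ (A t *ᵥ v₀)
      = star U *ᵥ (fun i => (lam i : ℂ) * (((e t i : ℝ) : ℂ) * w i)) := by
    intro t
    rw [hAv t, Matrix.mulVec_mulVec, hdecomp]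
    have h1 : star U * Matrix.diagonal (fun i => (lam i : ℂ)) * U * star U
        = star U * Matrix.diagonal (fun i => (lam i : ℂ)) := by
      rw [Matrix.mul_assoc, hU2, Matrix.mul_one]
    have hin : Matrix.diagonal (fun i => (lam i : ℂ)) *ᵥ (fun i => ((e t i : ℝ) : ℂ) * w i)
        = fun i => (lam i : ℂ) * (((e t i : ℝ) : ℂ) * w i) := by
      funext i
      rw [Matrix.mulVec_diagonal]
    rw [h1, ← Matrix.mulVec_mulVec, hin]
  set n : ℝ → ℝ := fun t => ∑ i, lam i * ((e t i) ^ 2 * ‖w i‖ ^ 2) with hndef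
  set g : ℝ → ℝ := fun t => ∑ i, (e t i) ^ 2 * ‖w i‖ ^ 2 with hgdef
  have hwk : (0 : ℝ) < ‖w k‖ ^ 2 := pow_pos (norm_pos_iff.mpr hv₀) 2
  have hg0 : ∀ t, 0 < g t := by
    intro t
    refine Finset.sum_pos' (fun i _ => by positivity) ⟨k, Finset.mem_univ k, ?_⟩
    have h1 : 0 < e t k := Real.exp_pos _
    positivity
  have hnormsq : ∀ t : ℝ, (∑ i, ‖(A t *ᵥ v₀) i‖ ^ 2) = g t := by
    intro t
    have h1 : ((∑ i, ‖(A t *ᵥ v₀) i‖ ^ 2 : ℝ) : ℂ)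
        = ((∑ i, ‖((e t i : ℝ) : ℂ) * w i‖ ^ 2 : ℝ) : ℂ) := by
      rw [← hdotself, ← hdotself, hAv t, hcancel]
    have h2 := Complex.ofReal_injective h1
    rw [h2, hgdef]
    refine Finset.sum_congr rfl fun i _ => ?_
    rw [norm_mul, mul_pow, Complex.norm_real, Real.norm_eq_abs,
      abs_of_pos (Real.exp_pos _)]
  have hnum : ∀ t : ℝ,
      star (A t *ᵥ v₀) ⬝ᵥ (H *ᵥ (A t *ᵥ v₀)) = ((n t : ℝ) : ℂ) := by
    intro t
    rw [hHx t, hAv t, hcancel, hndef]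
    push_cast
    simp only [dotProduct, Pi.star_apply, Complex.star_def]
    refine Finset.sum_congr rfl fun i _ => ?_
    have hc : (starRingEnd ℂ) (((e t i : ℝ) : ℂ) * w i)
        = ((e t i : ℝ) : ℂ) * (starRingEnd ℂ) (w i) := by
      simp [Complex.conj_ofReal]
    rw [hc]
    have hw2 : ((‖w i‖ : ℝ) : ℂ) ^ 2 = w i * (starRingEnd ℂ) (w i) := by
      rw [Complex.mul_conj']
    calc ((e t i : ℝ) : ℂ) * (starRingEnd ℂ) (w i)
          * ((lam i : ℂ) * (((e t i : ℝ) : ℂ) * w i))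
        = (lam i : ℂ) * (((e t i : ℝ) : ℂ) ^ 2 * (w i * (starRingEnd ℂ) (w i))) := by
          ring
      _ = (lam i : ℂ) * (((e t i : ℝ) : ℂ) ^ 2 * ((‖w i‖ : ℝ) : ℂ) ^ 2) := by rw [hw2]
  have hfr : ∀ t : ℝ, f t = ((n t / g t : ℝ) : ℂ) := by
    intro t
    have hl2 : l2norm (A t *ᵥ v₀) = Real.sqrt (g t) := by
      unfold l2norm
      rw [hnormsq]
    rw [hf, hB]
    simp only [star_smul, Matrix.mulVec_smul, smul_dotProduct,
      dotProduct_smul, smul_eq_mul]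
    rw [hnum t, hl2]
    have hst : star (((Real.sqrt (g t) : ℝ) : ℂ)⁻¹) = ((Real.sqrt (g t) : ℝ) : ℂ)⁻¹ := by
      rw [star_inv₀, Complex.star_def, Complex.conj_ofReal]
    rw [hst, ← Complex.ofReal_inv, ← Complex.ofReal_mul, ← Complex.ofReal_mul]
    congr 1
    rw [← mul_assoc, ← mul_inv, Real.mul_self_sqrt (hg0 t).le, inv_mul_eq_div]
  -- eigenvalue gap
  have hμlt : ∀ i : Fin m, i ≠ k → μ k < μ i := by
    intro i hik
    have h := hk i hik
    have h2 : |lam k - s| * |lam k - s| < |lam i - s| * |lam i - s| :=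
      mul_self_lt_mul_self (abs_nonneg _) h
    rw [abs_mul_abs_self, abs_mul_abs_self] at h2
    simp only [hμdef]
    nlinarith
  -- per-term limits
  have hterm : ∀ i : Fin m, Tendsto (fun t => Real.exp (-(2 * t * (μ i - μ k))))
      atTop (nhds (if i = k then 1 else 0)) := by
    intro i
    by_cases hik : i = k
    · subst hik
      simp only [sub_self, mul_zero, neg_zero, Real.exp_zero, if_pos rfl]
      exact tendsto_const_nhds
    · rw [if_neg hik]
      have hpos : 0 < 2 * (μ i - μ k) := by have := hμlt i hik; linarith
      have h1 : Tendsto (fun t : ℝ => 2 * (μ i - μ k) * t) atTop atTop :=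
        Tendsto.const_mul_atTop hpos tendsto_id
      have h2 : Tendsto (fun t : ℝ => -(2 * t * (μ i - μ k))) atTop atBot :=
        (tendsto_neg_atTop_atBot.comp h1).congr (fun t => by simp only [Function.comp]; ring_nf)
      exact Real.tendsto_exp_atBot.comp h2
  -- factoring out the dominant exponential
  have hfac : ∀ t (i : Fin m), (e t i) ^ 2 * ‖w i‖ ^ 2
      = Real.exp (-(2 * t * μ k)) * (Real.exp (-(2 * t * (μ i - μ k))) * ‖w i‖ ^ 2) := by
    intro t i
    have h1 : (e t i) ^ 2 = Real.exp (-(t * μ i) + -(t * μ i)) := by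
      rw [Real.exp_add, hedef, pow_two]
    rw [h1, ← mul_assoc, ← Real.exp_add]
    congr 2
    ring
  have hngt : ∀ t, n t = Real.exp (-(2 * t * μ k))
      * (∑ i, lam i * (Real.exp (-(2 * t * (μ i - μ k))) * ‖w i‖ ^ 2)) := by
    intro t
    rw [hndef, Finset.mul_sum]
    refine Finset.sum_congr rfl fun i _ => ?_
    rw [hfac t i]
    ring
  have hggt : ∀ t, g t = Real.exp (-(2 * t * μ k))
      * (∑ i, Real.exp (-(2 * t * (μ i - μ k))) * ‖w i‖ ^ 2) := by
    intro t
    rw [hgdef, Finset.mul_sum]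
    exact Finset.sum_congr rfl fun i _ => hfac t i
  have hquot : ∀ t, n t / g t
      = (∑ i, lam i * (Real.exp (-(2 * t * (μ i - μ k))) * ‖w i‖ ^ 2))
        / (∑ i, Real.exp (-(2 * t * (μ i - μ k))) * ‖w i‖ ^ 2) := by
    intro t
    rw [hngt t, hggt t, mul_div_mul_left _ _ (Real.exp_ne_zero _)]
  have hN : Tendsto (fun t => ∑ i, lam i * (Real.exp (-(2 * t * (μ i - μ k))) * ‖w i‖ ^ 2))
      atTop (nhds (lam k * ‖w k‖ ^ 2)) := by
    have h := tendsto_finset_sum Finset.univ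
      (fun i (_ : i ∈ Finset.univ) => (((hterm i).mul_const (‖w i‖ ^ 2)).const_mul (lam i)))
    have h2 : (∑ i, lam i * ((if i = k then (1 : ℝ) else 0) * ‖w i‖ ^ 2))
        = lam k * ‖w k‖ ^ 2 := by
      simp [ite_mul, mul_ite, Finset.sum_ite_eq', Finset.mem_univ]
    rw [← h2]
    exact h
  have hG : Tendsto (fun t => ∑ i, Real.exp (-(2 * t * (μ i - μ k))) * ‖w i‖ ^ 2)
      atTop (nhds (‖w k‖ ^ 2)) := by
    have h := tendsto_finset_sum Finset.univ
      (fun i (_ : i ∈ Finset.univ) => ((hterm i).mul_const (‖w i‖ ^ 2)))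
    have h2 : (∑ i, (if i = k then (1 : ℝ) else 0) * ‖w i‖ ^ 2) = ‖w k‖ ^ 2 := by
      simp [ite_mul, Finset.sum_ite_eq', Finset.mem_univ]
    rw [← h2]
    exact h
  have hreal : Tendsto (fun t => n t / g t) atTop (nhds (lam k)) := by
    have h := hN.div hG (ne_of_gt hwk)
    have h3 : lam k * ‖w k‖ ^ 2 / ‖w k‖ ^ 2 = lam k := by
      rw [mul_div_assoc, div_self (ne_of_gt hwk), mul_one]
    rw [h3] at h
    exact Tendsto.congr (fun t => (hquot t).symm) h
  have hC : Tendsto (fun t => ((n t / g t : ℝ) : ℂ)) atTop (nhds ((lam k : ℝ) : ℂ)) :=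
    (Complex.continuous_ofReal.tendsto _).comp hreal
  exact Tendsto.congr (fun t => (hfr t).symm) hC
end

section
/- Under the same hypotheses as the imaginary-time-evolution convergence theorem (H Hermitian with distinct eigenvalues, s not a midpoint of adjacent eigenvalues, v₀ having nonzero overlap with the eigenvector w_k where λ_k is the unique eigenvalue closest to s), the normalized evolved state B(s,t)v₀ = exp(-(H-sI)²t)v₀ / ‖exp(-(H-sI)²t)v₀‖₂ converges as t→∞ to (v_k/|v_k|)·w_k, i.e., to the eigenvector of H corresponding to λ_k up to a phase, where v_k = ⟨w_k, v₀⟩. -/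
open NormedSpace Filter Matrix

lemma l2norm_sq_eq {m : ℕ} (x : Fin m → ℂ) :
    (∑ i, ‖x i‖ ^ 2 : ℝ) = (star x ⬝ᵥ x).re := by
  rw [dotProduct, Complex.re_sum]
  congr 1; ext i
  rw [Pi.star_apply, RCLike.star_def, mul_comm, Complex.mul_conj]
  simp [Complex.normSq_eq_norm_sq, ← Complex.ofReal_pow]

lemma l2norm_starU {m : ℕ} (U : Matrix (Fin m) (Fin m) ℂ)
    (hU : U ∈ Matrix.unitaryGroup (Fin m) ℂ) (x : Fin m → ℂ) :
    l2norm (star U *ᵥ x) = l2norm x := by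
  unfold l2norm
  rw [l2norm_sq_eq, l2norm_sq_eq]
  have hstar : (star U : Matrix (Fin m) (Fin m) ℂ) = Uᴴ := rfl
  have h1 : U * Uᴴ = 1 := Matrix.mem_unitaryGroup_iff.mp hU
  rw [hstar, star_mulVec, conjTranspose_conjTranspose, ← dotProduct_mulVec, mulVec_mulVec,
    h1, one_mulVec]

lemma continuous_l2norm {m : ℕ} : Continuous (l2norm (m := m)) := by
  unfold l2norm
  exact Real.continuous_sqrt.comp
    (continuous_finset_sum _ fun i _ => ((continuous_apply i).norm.pow 2))

lemma l2norm_real_smul {m : ℕ} (c : ℝ) (hc : 0 ≤ c) (x : Fin m → ℂ) :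
    l2norm (((c : ℂ)) • x) = c * l2norm x := by
  unfold l2norm
  have h : ∀ i, ‖((c:ℂ) • x) i‖ ^ 2 = c ^ 2 * ‖x i‖ ^ 2 := by
    intro i
    simp [Pi.smul_apply, norm_smul, mul_pow, Complex.norm_real, abs_of_nonneg hc]
  simp_rw [h]
  rw [← Finset.mul_sum, Real.sqrt_mul (sq_nonneg c), Real.sqrt_sq hc]

lemma exp_ite_diag {m : ℕ} (U : Matrix (Fin m) (Fin m) ℂ)
    (hU : U ∈ Matrix.unitaryGroup (Fin m) ℂ)
    (lam : Fin m → ℝ) (s t : ℝ) :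
    exp (-(t : ℂ) • ((star U * Matrix.diagonal (fun i => (lam i : ℂ)) * U) - (s : ℂ) • 1) ^ 2)
      = star U * Matrix.diagonal (fun i => (Real.exp (-(t * (lam i - s) ^ 2)) : ℂ)) * U := by
  have h1 : star U * U = 1 := Matrix.mem_unitaryGroup_iff'.mp hU
  have h2 : U * star U = 1 := Matrix.mem_unitaryGroup_iff.mp hU
  set u : (Matrix (Fin m) (Fin m) ℂ)ˣ := ⟨star U, U, h1, h2⟩ with hu
  have hval : (↑u : Matrix (Fin m) (Fin m) ℂ) = star U := rfl
  have hinv : (↑u⁻¹ : Matrix (Fin m) (Fin m) ℂ) = U := rfl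
  set D : Matrix (Fin m) (Fin m) ℂ := Matrix.diagonal (fun i => (lam i : ℂ)) with hD
  have hsub : star U * D * U - (s : ℂ) • 1 = (↑u : Matrix (Fin m) (Fin m) ℂ) * (D - (s : ℂ) • 1) * (↑u⁻¹ : Matrix (Fin m) (Fin m) ℂ) := by
    rw [hval, hinv, Matrix.mul_sub, Matrix.sub_mul]
    congr 1
    rw [Matrix.mul_smul, Matrix.smul_mul, Matrix.mul_one, h1]
  rw [hsub, Units.conj_pow]
  have hsmul : -(t : ℂ) • ((↑u : Matrix (Fin m) (Fin m) ℂ) * (D - (s:ℂ)•1) ^ 2 * (↑u⁻¹ : Matrix (Fin m) (Fin m) ℂ))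
      = (↑u : Matrix (Fin m) (Fin m) ℂ) * (-(t : ℂ) • (D - (s:ℂ)•1) ^ 2) * (↑u⁻¹ : Matrix (Fin m) (Fin m) ℂ) := by
    rw [Matrix.mul_smul, Matrix.smul_mul]
  rw [hsmul, Matrix.exp_units_conj, hval, hinv]
  congr 1
  congr 1
  have hdd : D - (s:ℂ) • 1 = Matrix.diagonal (fun i => ((lam i : ℂ) - s)) := by
    rw [hD, Matrix.smul_one_eq_diagonal, Matrix.diagonal_sub]
  rw [hdd]
  have : (-(t:ℂ)) • Matrix.diagonal (fun i => ((lam i : ℂ) - s)) ^ 2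
      = Matrix.diagonal (fun i => -(t:ℂ) * ((lam i : ℂ) - s) ^ 2) := by
    rw [Matrix.diagonal_pow, ← Matrix.diagonal_smul]
    refine congrArg Matrix.diagonal ?_
    funext i
    simp [smul_eq_mul]
  rw [this, Matrix.exp_diagonal, Pi.exp_def]
  refine congrArg Matrix.diagonal ?_
  funext i
  rw [← Complex.exp_eq_exp_ℂ]
  rw [show (-(t:ℂ) * ((lam i : ℂ) - s) ^ 2) = ((-(t * (lam i - s)^2) : ℝ) : ℂ) by push_cast; ring]
  exact (Complex.ofReal_exp _).symm

/-- **Convergence of the normalized imaginary-time-evolved state to an eigenvector.**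
Under the hypotheses of the ITE convergence theorem (`H = U⋆ Λ U` Hermitian with distinct
eigenvalues, `s` with unique closest eigenvalue `λ k`, `v₀` with nonzero overlap
`v_k = ⟨w_k, v₀⟩ = (U *ᵥ v₀) k ≠ 0`), the normalized evolved state
`B s t v₀ = exp (-(H-sI)² t) v₀ / ‖·‖₂` converges as `t → ∞` to `(v_k / |v_k|) • w_k`,
where `w_k` is the eigenvector of `H` for `λ k` (the `k`-th column of `U⋆`). -/
theorem ite_convergence_eigenvector
    {m : ℕ} (H : Matrix (Fin m) (Fin m) ℂ) (hH : H.IsHermitian)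
    (lam : Fin m → ℝ) (hlam : StrictMono lam)
    (U : Matrix (Fin m) (Fin m) ℂ) (hU : U ∈ Matrix.unitaryGroup (Fin m) ℂ)
    (hdecomp : H = star U * Matrix.diagonal (fun i => (lam i : ℂ)) * U)
    (s : ℝ) (k : Fin m)
    (hk : ∀ j : Fin m, j ≠ k → |lam k - s| < |lam j - s|)
    (v₀ : Fin m → ℂ) (hv₀ : (U *ᵥ v₀) k ≠ 0)
    (w : Fin m → ℂ) (hw : ∀ j : Fin m, w j = (star U) j k)
    (B : ℝ → Fin m → ℂ)
    (hB : ∀ t : ℝ, B t =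
      (l2norm (exp (-(t : ℂ) • (H - (s : ℂ) • 1) ^ 2) *ᵥ v₀) : ℂ)⁻¹ •
        (exp (-(t : ℂ) • (H - (s : ℂ) • 1) ^ 2) *ᵥ v₀)) :
    Tendsto B atTop (nhds (((U *ᵥ v₀) k / (‖(U *ᵥ v₀) k‖ : ℂ)) • w)) := by
  set v : Fin m → ℂ := U *ᵥ v₀ with hv
  have hvk : v k ≠ 0 := hv₀
  set f : ℝ → Fin m → ℂ :=
    fun t i => ((Real.exp (-(t * ((lam i - s)^2 - (lam k - s)^2))) : ℝ) : ℂ) * v i with hf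
  set g : Fin m → ℂ := fun i => if i = k then v k else 0 with hg
  -- Step 1 : rewrite B
  have hBt : ∀ t, B t = star U *ᵥ (((l2norm (f t) : ℝ) : ℂ)⁻¹ • f t) := by
    intro t
    rw [hB t, hdecomp, exp_ite_diag U hU lam s t]
    have hmv : (star U * Matrix.diagonal (fun i => (Real.exp (-(t*(lam i - s)^2)) : ℂ)) * U) *ᵥ v₀
        = star U *ᵥ ((((Real.exp (-(t * (lam k - s)^2))) : ℝ) : ℂ) • f t) := by
      rw [Matrix.mul_assoc, ← Matrix.mulVec_mulVec, ← Matrix.mulVec_mulVec]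
      refine congrArg (fun x => star U *ᵥ x) ?_
      funext i
      rw [Matrix.mulVec_diagonal]
      show (Real.exp (-(t*(lam i - s)^2)) : ℂ) * v i = _
      simp only [Pi.smul_apply, hf, smul_eq_mul]
      have harg : -(t * (lam i - s)^2)
          = -(t * (lam k - s)^2) + -(t * ((lam i - s)^2 - (lam k - s)^2)) := by ring
      rw [harg, Real.exp_add, Complex.ofReal_mul, mul_assoc]
    have hcne : ((Real.exp (-(t * (lam k - s)^2)) : ℝ) : ℂ) ≠ 0 := by
      exact_mod_cast (Real.exp_pos _).ne'
    rw [hmv, l2norm_starU U hU,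
      l2norm_real_smul _ (Real.exp_pos _).le, Matrix.mulVec_smul, smul_smul, ← Matrix.mulVec_smul]
    refine congrArg (fun x => star U *ᵥ x) ?_
    congr 1
    rw [Complex.ofReal_mul, mul_inv, mul_right_comm, inv_mul_cancel₀ hcne, one_mul]
  -- Step 2 : pointwise limit of f
  have hfg : Tendsto f atTop (nhds g) := by
    rw [tendsto_pi_nhds]
    intro i
    by_cases hik : i = k
    · subst hik
      have : ∀ t, f t i = v i := by
        intro t; simp [hf]
      simp only [this, hg, if_pos rfl]
      exact tendsto_const_nhds
    · have hlt : (lam k - s)^2 < (lam i - s)^2 := by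
        rw [← sq_abs, ← sq_abs (lam i - s)]
        exact pow_lt_pow_left₀ (hk i hik) (abs_nonneg _) two_ne_zero
      have ha : 0 < (lam i - s)^2 - (lam k - s)^2 := by linarith
      have hbot : Tendsto (fun t : ℝ => -(t * ((lam i - s)^2 - (lam k - s)^2))) atTop atBot := by
        rw [tendsto_neg_atBot_iff]
        exact tendsto_id.atTop_mul_const ha
      have he0 : Tendsto (fun t => Real.exp (-(t * ((lam i - s)^2 - (lam k - s)^2)))) atTop (nhds 0) :=
        Real.tendsto_exp_atBot.comp hbot
      have he0' : Tendsto (fun t => ((Real.exp (-(t * ((lam i - s)^2 - (lam k - s)^2))) : ℝ) : ℂ))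
          atTop (nhds 0) := by
        rw [show ((0:ℂ)) = ((0:ℝ):ℂ) by norm_num]
        exact (Complex.continuous_ofReal.tendsto 0).comp he0
      have := he0'.mul_const (v i)
      simpa [hf, hg, hik] using this
  -- Step 3 : norm of limit
  have hng : l2norm g = ‖v k‖ := by
    unfold l2norm
    have hsum : ∑ i, ‖g i‖ ^ 2 = ‖v k‖ ^ 2 := by
      have h : ∀ i, ‖g i‖ ^ 2 = if i = k then ‖v k‖ ^ 2 else 0 := by
        intro i; by_cases h : i = k <;> simp [hg, h]
      rw [Finset.sum_congr rfl fun i _ => h i, Finset.sum_ite_eq' Finset.univ k fun _ => ‖v k‖ ^ 2]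
      simp
    rw [hsum, Real.sqrt_sq (norm_nonneg _)]
  have hngne : (l2norm g : ℝ) ≠ 0 := by
    rw [hng]; exact norm_ne_zero_iff.mpr hvk
  -- Step 4 : convergence of the normalized vector
  have hnorm : Tendsto (fun t => l2norm (f t)) atTop (nhds (l2norm g)) :=
    (continuous_l2norm.tendsto g).comp hfg
  have hinv : Tendsto (fun t => ((l2norm (f t) : ℝ) : ℂ)⁻¹) atTop (nhds (((l2norm g : ℝ) : ℂ))⁻¹) :=
    ((Complex.continuous_ofReal.tendsto _).comp hnorm).inv₀ (by exact_mod_cast hngne)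
  have hPhi : Tendsto (fun t => ((l2norm (f t) : ℝ) : ℂ)⁻¹ • f t) atTop
      (nhds ((((l2norm g : ℝ) : ℂ))⁻¹ • g)) := hinv.smul hfg
  have hmulcont : Continuous (fun x : Fin m → ℂ => star U *ᵥ x) := by
    refine continuous_pi fun j => ?_
    unfold Matrix.mulVec dotProduct
    exact continuous_finset_sum _ fun l _ => continuous_const.mul (continuous_apply l)
  have hfinal : Tendsto B atTop (nhds (star U *ᵥ ((((l2norm g : ℝ) : ℂ))⁻¹ • g))) := by
    have hcomp := (hmulcont.tendsto _).comp hPhi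
    have hEq : (fun t => star U *ᵥ (((l2norm (f t) : ℝ) : ℂ)⁻¹ • f t)) = B :=
      funext fun t => (hBt t).symm
    rw [← hEq]
    exact hcomp
  -- Step 5 : identify the limit
  have hlim : star U *ᵥ ((((l2norm g : ℝ) : ℂ))⁻¹ • g) = (v k / (‖v k‖ : ℂ)) • w := by
    funext j
    rw [hng]
    show ∑ l, (star U) j l * ((((‖v k‖ : ℝ) : ℂ))⁻¹ • g) l = _
    have h : ∀ l, (star U) j l * ((((‖v k‖ : ℝ) : ℂ))⁻¹ • g) l
        = if l = k then (star U) j k * ((‖v k‖ : ℂ)⁻¹ * v k) else 0 := by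
      intro l; by_cases hlk : l = k <;> simp [hg, hlk]
    rw [Finset.sum_congr rfl fun l _ => h l,
      Finset.sum_ite_eq' Finset.univ k fun _ => (star U) j k * ((‖v k‖ : ℂ)⁻¹ * v k)]
    simp [hw j, div_eq_mul_inv]
    ring
  rw [hlim] at hfinal
  exact hfinal
end

section
/- Let d₁,...,d_m be real numbers with a unique maximum d_k, and let v ∈ ℂ^m with v_k ≠ 0. Define x_j(t) = v_j / sqrt(Σᵢ e^{2(dᵢ - d_j)t} |vᵢ|²). Then as t → ∞, x_j(t) → 0 for j ≠ k and x_k(t) → v_k/|v_k|. -/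
open Filter

/-- **Core limit computation for normalized imaginary time evolution.**
Let `d 0, ..., d (m-1)` be real numbers with a unique maximum `d k`, and `v : ℂ^m` with
`v k ≠ 0`.  Define `x j t = v j / sqrt (∑ i, e^{2(d i - d j)t} |v i|²)`.  Then as
`t → ∞`, `x j t → 0` for `j ≠ k`, and `x k t → v k / |v k|`. -/
theorem normalized_ite_coordinate_limits
    {m : ℕ} (d : Fin m → ℝ) (k : Fin m)
    (hk : ∀ j : Fin m, j ≠ k → d j < d k)
    (v : Fin m → ℂ) (hv : v k ≠ 0)
    (x : Fin m → ℝ → ℂ)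
    (hx : ∀ j : Fin m, ∀ t : ℝ,
      x j t = v j / ((Real.sqrt (∑ i, Real.exp (2 * (d i - d j) * t) * ‖v i‖ ^ 2) : ℝ) : ℂ)) :
    (∀ j : Fin m, j ≠ k → Tendsto (x j) atTop (nhds 0))
    ∧ Tendsto (x k) atTop (nhds (v k / (‖v k‖ : ℂ))) := by
  constructor
  · intro j hj
    -- The sum tends to infinity because the k-th term does.
    have hSum : Tendsto (fun t : ℝ => ∑ i, Real.exp (2 * (d i - d j) * t) * ‖v i‖ ^ 2)
        atTop atTop := by
      have hterm : Tendsto (fun t : ℝ => Real.exp (2 * (d k - d j) * t) * ‖v k‖ ^ 2)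
          atTop atTop := by
        have hc : (0 : ℝ) < 2 * (d k - d j) := by
          have := hk j hj; linarith
        have h1 : Tendsto (fun t : ℝ => 2 * (d k - d j) * t) atTop atTop :=
          Tendsto.const_mul_atTop hc tendsto_id
        have h2 : Tendsto (fun t : ℝ => Real.exp (2 * (d k - d j) * t)) atTop atTop :=
          Real.tendsto_exp_atTop.comp h1
        exact h2.atTop_mul_const (pow_pos (norm_pos_iff.mpr hv) 2)
      refine tendsto_atTop_mono (fun t => ?_) hterm
      exact Finset.single_le_sum (f := fun i => Real.exp (2 * (d i - d j) * t) * ‖v i‖ ^ 2)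
        (fun i _ => by positivity) (Finset.mem_univ k)
    have hsq : Tendsto Real.sqrt atTop atTop := by
      refine tendsto_atTop_atTop.mpr fun b => ⟨b ^ 2, fun a ha => ?_⟩
      calc b ≤ |b| := le_abs_self b
        _ = Real.sqrt (b ^ 2) := (Real.sqrt_sq_eq_abs b).symm
        _ ≤ Real.sqrt a := Real.sqrt_le_sqrt ha
    have hSqrt : Tendsto (fun t : ℝ =>
        Real.sqrt (∑ i, Real.exp (2 * (d i - d j) * t) * ‖v i‖ ^ 2)) atTop atTop :=
      hsq.comp hSum
    rw [tendsto_zero_iff_norm_tendsto_zero]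
    have heq : ∀ t : ℝ, ‖x j t‖ = ‖v j‖ /
        Real.sqrt (∑ i, Real.exp (2 * (d i - d j) * t) * ‖v i‖ ^ 2) := by
      intro t
      rw [hx j t, norm_div, Complex.norm_real, Real.norm_eq_abs,
        abs_of_nonneg (Real.sqrt_nonneg _)]
    simp only [heq]
    exact tendsto_const_nhds.div_atTop hSqrt
  · have hSum : Tendsto (fun t : ℝ => ∑ i, Real.exp (2 * (d i - d k) * t) * ‖v i‖ ^ 2)
        atTop (nhds (‖v k‖ ^ 2)) := by
      have : (‖v k‖ ^ 2) = ∑ i, (if i = k then ‖v k‖ ^ 2 else 0) := by simp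
      rw [this]
      refine tendsto_finset_sum _ (fun i _ => ?_)
      by_cases hi : i = k
      · subst hi
        simp only [if_pos rfl, sub_self, mul_zero, zero_mul, Real.exp_zero, one_mul]
        exact tendsto_const_nhds
      · simp only [if_neg hi]
        have hc : 2 * (d i - d k) < 0 := by have := hk i hi; linarith
        have h1 : Tendsto (fun t : ℝ => 2 * (d i - d k) * t) atTop atBot :=
          Tendsto.const_mul_atTop_of_neg hc tendsto_id
        have h2 : Tendsto (fun t : ℝ => Real.exp (2 * (d i - d k) * t)) atTop (nhds 0) :=
          Real.tendsto_exp_atBot.comp h1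
        simpa using h2.mul_const (‖v i‖ ^ 2)
    have hSqrt : Tendsto (fun t : ℝ =>
        Real.sqrt (∑ i, Real.exp (2 * (d i - d k) * t) * ‖v i‖ ^ 2)) atTop (nhds ‖v k‖) := by
      have := (Real.continuous_sqrt.tendsto (‖v k‖ ^ 2)).comp hSum
      simpa [Real.sqrt_sq (norm_nonneg (v k)), Function.comp_def] using this
    have hC : Tendsto (fun t : ℝ =>
        ((Real.sqrt (∑ i, Real.exp (2 * (d i - d k) * t) * ‖v i‖ ^ 2) : ℝ) : ℂ))
        atTop (nhds (‖v k‖ : ℂ)) :=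
      (Complex.continuous_ofReal.tendsto _).comp hSqrt
    have hne : ((‖v k‖ : ℝ) : ℂ) ≠ 0 := by
      simpa using norm_ne_zero_iff.mpr hv
    have := Tendsto.div (tendsto_const_nhds (x := v k)) hC hne
    refine this.congr fun t => ?_
    exact (hx k t).symm
end

section
/- With notation as in the ITE convergence setup (μᵢ = (λᵢ − s)², unique minimizer μ_k, overlap v_k ≠ 0), the convergence of g(t) = Σᵢ μᵢ e^{−2μᵢt}|vᵢ|²/Σᵢ e^{−2μᵢt}|vᵢ|² to μ_k is exponential with rate governed by the spectral gap: g(t) − μ_k ≤ (μ' − μ_k) · (Σ_{j≠k}|vⱼ|²/|v_k|²) · e^{−2(μ'' − μ_k)t}, where μ'' = min_{j≠k} μⱼ and μ' = max_j μⱼ. In particular, convergence slows as the gap μ'' − μ_k = min_{j≠k}(λⱼ−s)² − (λ_k−s)² shrinks, i.e., as s approaches the midpoint of two adjacent eigenvalues. -/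
/-- **Exponential convergence rate of imaginary time evolution, governed by the gap.**
With `μ i = (λ i - s)²`, a unique minimizer `μ k`, and overlap `v k ≠ 0`, the Rayleigh
quotient `g t = (∑ i, μ i e^{-2 μ i t} |v i|²) / (∑ i, e^{-2 μ i t} |v i|²)` converges
to `μ k` exponentially with rate governed by the spectral gap:
`g t - μ k ≤ (μ' - μ k) (∑_{j ≠ k} |v j|² / |v k|²) e^{-2(μ'' - μ k) t}` for `t ≥ 0`,
where `μ'' = min_{j ≠ k} μ j` and `μ' = max_j μ j`.  Convergence slows as the gap
`μ'' - μ k` shrinks, i.e. as `s` approaches a midpoint of adjacent eigenvalues. -/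
theorem ite_exponential_convergence_rate
    {m : ℕ} (μ : Fin m → ℝ) (k : Fin m)
    (hk : ∀ j : Fin m, j ≠ k → μ k < μ j)
    (v : Fin m → ℂ) (hv : v k ≠ 0)
    (hne : (Finset.univ.erase k).Nonempty)
    (g : ℝ → ℝ)
    (hg : ∀ t : ℝ, g t =
      (∑ i, μ i * Real.exp (-2 * μ i * t) * ‖v i‖ ^ 2) /
        (∑ i, Real.exp (-2 * μ i * t) * ‖v i‖ ^ 2))
    (μ' μ'' : ℝ)
    (hμ' : μ' = Finset.univ.sup' ⟨k, Finset.mem_univ k⟩ μ)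
    (hμ'' : μ'' = (Finset.univ.erase k).inf' hne μ) :
    ∀ t : ℝ, 0 ≤ t →
      g t - μ k ≤ (μ' - μ k) * ((∑ j ∈ Finset.univ.erase k, ‖v j‖ ^ 2) / ‖v k‖ ^ 2)
        * Real.exp (-2 * (μ'' - μ k) * t) := by
  intro t ht
  set w : Fin m → ℝ := fun i => ‖v i‖ ^ 2 with hw
  set e : Fin m → ℝ := fun i => Real.exp (-2 * μ i * t) with he
  have hwk : 0 < w k := pow_pos (norm_pos_iff.mpr hv) 2
  have hwnn : ∀ i, 0 ≤ w i := fun i => by positivity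
  have hepos : ∀ i, 0 < e i := fun i => Real.exp_pos _
  set D : ℝ := ∑ i, e i * w i with hD
  have hDk : e k * w k ≤ D := by
    rw [hD, ← Finset.add_sum_erase _ _ (Finset.mem_univ k)]
    have : 0 ≤ ∑ j ∈ Finset.univ.erase k, e j * w j :=
      Finset.sum_nonneg fun j _ => mul_nonneg (hepos j).le (hwnn j)
    linarith
  have hDpos : 0 < D := lt_of_lt_of_le (mul_pos (hepos k) hwk) hDk
  -- rewrite g t - μ k
  have hgt : g t - μ k = (∑ j ∈ Finset.univ.erase k, (μ j - μ k) * e j * w j) / D := by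
    rw [hg t]
    have hnum : (∑ i, μ i * Real.exp (-2 * μ i * t) * ‖v i‖ ^ 2) =
        ∑ i, μ i * e i * w i := rfl
    have hden : (∑ i, Real.exp (-2 * μ i * t) * ‖v i‖ ^ 2) = D := rfl
    rw [hnum, hden, div_sub' (ne_of_gt hDpos)]
    congr 1
    rw [hD, Finset.sum_mul, ← Finset.sum_sub_distrib]
    rw [← Finset.add_sum_erase _ (fun i => μ i * e i * w i - e i * w i * μ k)
      (Finset.mem_univ k)]
    have h0 : μ k * e k * w k - e k * w k * μ k = 0 := by ring
    rw [h0, zero_add]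
    exact Finset.sum_congr rfl fun j _ => by ring
  rw [hgt]
  -- bound the numerator
  set B : ℝ := (μ' - μ k) * Real.exp (-2 * μ'' * t) * ∑ j ∈ Finset.univ.erase k, w j with hB
  have hμ'k : μ k ≤ μ' := by
    rw [hμ']
    exact Finset.le_sup' μ (Finset.mem_univ k)
  have hAB : (∑ j ∈ Finset.univ.erase k, (μ j - μ k) * e j * w j) ≤ B := by
    rw [hB, Finset.mul_sum]
    apply Finset.sum_le_sum
    intro j hj
    have hjk : j ≠ k := Finset.ne_of_mem_erase hj
    have h1 : μ j - μ k ≤ μ' - μ k := by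
      have := Finset.le_sup' μ (Finset.mem_univ j)
      rw [← hμ'] at this
      linarith
    have h2 : e j ≤ Real.exp (-2 * μ'' * t) := by
      apply Real.exp_le_exp.mpr
      have : μ'' ≤ μ j := by
        rw [hμ'']
        exact Finset.inf'_le μ hj
      nlinarith
    have h3 : 0 ≤ μ j - μ k := le_of_lt (by linarith [hk j hjk])
    have h4 : (μ j - μ k) * e j ≤ (μ' - μ k) * Real.exp (-2 * μ'' * t) :=
      mul_le_mul h1 h2 (hepos j).le (by linarith)
    exact mul_le_mul_of_nonneg_right h4 (hwnn j)
  have hBnn : 0 ≤ B := by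
    rw [hB]
    have : 0 ≤ ∑ j ∈ Finset.univ.erase k, w j :=
      Finset.sum_nonneg fun j _ => hwnn j
    exact mul_nonneg (mul_nonneg (by linarith) (Real.exp_pos _).le) this
  have key : (∑ j ∈ Finset.univ.erase k, (μ j - μ k) * e j * w j) / D ≤ B / (e k * w k) :=
    div_le_div₀ hBnn hAB (mul_pos (hepos k) hwk) hDk
  refine key.trans (le_of_eq ?_)
  have hexp : Real.exp (-2 * (μ'' - μ k) * t) =
      Real.exp (-2 * μ'' * t) / Real.exp (-2 * μ k * t) := by
    rw [← Real.exp_sub]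
    ring_nf
  have hS : (∑ j ∈ Finset.univ.erase k, ‖v j‖ ^ 2) = ∑ j ∈ Finset.univ.erase k, w j := rfl
  have hvk : ‖v k‖ ^ 2 = w k := rfl
  have hek : e k = Real.exp (-2 * μ k * t) := rfl
  have gen : ∀ a E S wk Ek : ℝ, wk ≠ 0 → Ek ≠ 0 →
      a * E * S / (Ek * wk) = a * (S / wk) * (E / Ek) := by
    intros a E S wk Ek h1 h2
    field_simp
  rw [hS, hvk, hB, hek, hexp]
  exact gen _ _ _ _ _ (ne_of_gt hwk) (Real.exp_ne_zero _)
end
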